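/- Let f* be an arbitrary probability density on ℝ (symmetry not required). Let ε ∈ ℝ and x ∈ ℝ with f_r(x) > 0 be such that (8·|ε|/r)·√(log(1/(r·f_r(x)))) ≤ 1. Then f_r(x + ε)/f_r(x) ≤ 1 + (10·|ε|/r)·√(log(1/(f_r(x)·r))). -/

import Mathlib

/-!
For a threshold `t ≥ 1` the Gaussian kernel `w = w_r` satisfies, for all `u`,
`w(u + ε) ≤ e^δ w(u) + (|ε|/r)(t + |ε|/2r) w(rt)` with `δ = (t + |ε|/r)|ε|/r`:
near the origin (`|u| ≤ rt + |ε|`) the ratio `w(u + ε)/w(u)` is at most `e^δ`, while in the tail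
the convexity bound `w(v) - w(u) ≤ w(v)(u² - v²)/2r²` and the decay of `s ↦ (s + b) w(s)` on
`[r, ∞)` bound the increment by its value at the threshold. Integrating against `f*` transfers
the bound to `f_r`. The choice `t = 2√L`, `L = log(1/(r f_r(x)))`, gives `w(rt) = w(0)(r f_r(x))²`,
so the tail term is also a small multiple of `f_r(x)`, and `8(|ε|/r)√L ≤ 1` makes both terms
small.
-/

open MeasureTheory Real Filter

/-- Density of the Gaussian `N(0, r²)`. -/
noncomputable def gaussDensity (r x : ℝ) : ℝ :=
  (Real.sqrt (2 * Real.pi * r ^ 2))⁻¹ * Real.exp (-x ^ 2 / (2 * r ^ 2))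

/-- The `r`-smoothed density `f_r(x) = ∫ f(y) w_r(x − y) dy`. -/
noncomputable def smoothed (f : ℝ → ℝ) (r x : ℝ) : ℝ :=
  ∫ y, f y * gaussDensity r (x - y)

/-- The score function `s_r(x) = f_r'(x) / f_r(x)` of the smoothed density. -/
noncomputable def score (f : ℝ → ℝ) (r x : ℝ) : ℝ :=
  deriv (smoothed f r) x / smoothed f r x

/-- The `r`-smoothed Fisher information `I_r = E_{x∼f_r}[s_r(x)²]`. -/
noncomputable def fisherInfo (f : ℝ → ℝ) (r : ℝ) : ℝ :=
  ∫ x, smoothed f r x * score f r x ^ 2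

/-- The measure on ℝ with density `f` with respect to Lebesgue measure. -/
noncomputable def densMeasure (f : ℝ → ℝ) : Measure ℝ :=
  MeasureTheory.volume.withDensity fun x => ENNReal.ofReal (f x)

/-- `f` is a probability density on ℝ. -/
def IsDensity (f : ℝ → ℝ) : Prop :=
  (∀ x, 0 ≤ f x) ∧ MeasureTheory.Integrable f ∧ (∫ x, f x) = 1

/-- The density `f` has mean `μ`. -/
def HasMean (f : ℝ → ℝ) (μ : ℝ) : Prop :=
  MeasureTheory.Integrable (fun x => x * f x) ∧ (∫ x, x * f x) = μ

/-- The density `f` (with mean `μ`) has variance `σ2`. -/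
def HasVar (f : ℝ → ℝ) (μ σ2 : ℝ) : Prop :=
  MeasureTheory.Integrable (fun x => (x - μ) ^ 2 * f x) ∧ (∫ x, (x - μ) ^ 2 * f x) = σ2

section gaussDensity

variable {r : ℝ}

lemma gaussDensity_nonneg (r u : ℝ) : 0 ≤ gaussDensity r u := by
  unfold gaussDensity; positivity

lemma gaussDensity_abs (r u : ℝ) : gaussDensity r |u| = gaussDensity r u := by
  simp only [gaussDensity, sq_abs]

lemma continuous_gaussDensity (r : ℝ) : Continuous (gaussDensity r) := by
  unfold gaussDensity; fun_prop

lemma gaussDensity_eq_mul_exp (r u v : ℝ) :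
    gaussDensity r v = gaussDensity r u * exp ((u ^ 2 - v ^ 2) / (2 * r ^ 2)) := by
  simp only [gaussDensity, mul_assoc, ← exp_add]
  ring_nf

lemma gaussDensity_le_gaussDensity_zero (r u : ℝ) : gaussDensity r u ≤ gaussDensity r 0 := by
  rw [gaussDensity_eq_mul_exp r 0 u]
  refine mul_le_of_le_one_right (gaussDensity_nonneg r 0) (exp_le_one_iff.2 ?_)
  exact div_nonpos_of_nonpos_of_nonneg (by nlinarith) (by positivity)

lemma mul_gaussDensity_zero_le_half (hr : 0 < r) : r * gaussDensity r 0 ≤ 1 / 2 := by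
  have h2π : 2 ≤ √(2 * π) := by
    rw [le_sqrt zero_le_two (by positivity)]; linarith [pi_gt_three]
  simp only [gaussDensity, sqrt_mul' _ (sq_nonneg r), sqrt_sq hr.le, ne_eq, OfNat.ofNat_ne_zero,
    not_false_eq_true, zero_pow, neg_zero, zero_div, exp_zero, mul_one, mul_inv]
  rw [mul_left_comm, mul_inv_cancel₀ hr.ne', mul_one, one_div]
  exact inv_anti₀ two_pos h2π

lemma gaussDensity_self_mul (hr : r ≠ 0) (t : ℝ) :
    gaussDensity r (r * t) = gaussDensity r 0 * exp (-t ^ 2 / 2) := by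
  rw [gaussDensity_eq_mul_exp r 0]
  congr 2
  field_simp
  ring

lemma gaussDensity_add_le_exp_mul (r u ε : ℝ) :
    gaussDensity r (u + ε) ≤ exp (|u| * |ε| / r ^ 2) * gaussDensity r u := by
  rw [gaussDensity_eq_mul_exp r u, mul_comm]
  refine mul_le_mul_of_nonneg_right (exp_le_exp.2 ?_) (gaussDensity_nonneg r u)
  rw [show |u| * |ε| / r ^ 2 = 2 * (|u| * |ε|) / (2 * r ^ 2) by ring]
  gcongr
  nlinarith [neg_abs_le (u * ε), abs_mul u ε, sq_nonneg ε]

lemma gaussDensity_sub_gaussDensity_le (r u v : ℝ) :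
    gaussDensity r v - gaussDensity r u ≤
      gaussDensity r v * ((u ^ 2 - v ^ 2) / (2 * r ^ 2)) := by
  have h := mul_le_mul_of_nonneg_left (add_one_le_exp ((v ^ 2 - u ^ 2) / (2 * r ^ 2)))
    (gaussDensity_nonneg r v)
  rw [← gaussDensity_eq_mul_exp r v u] at h
  rw [show (u ^ 2 - v ^ 2) / (2 * r ^ 2) = -((v ^ 2 - u ^ 2) / (2 * r ^ 2)) by ring]
  linarith

lemma antitoneOn_add_mul_gaussDensity (hr : 0 < r) {b : ℝ} (hb : 0 ≤ b) :
    AntitoneOn (fun t => (t + b) * gaussDensity r t) (Set.Ici r) := by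
  intro s (hs : r ≤ s) t _ hst
  have hgrowth : t - s ≤ (s + b) * ((t ^ 2 - s ^ 2) / (2 * r ^ 2)) := by
    rw [mul_div_assoc', le_div_iff₀ (by positivity)]
    have h : 2 * r ^ 2 ≤ (s + b) * (t + s) := by nlinarith
    nlinarith [mul_le_mul_of_nonneg_left h (sub_nonneg.2 hst)]
  calc (t + b) * gaussDensity r t
      ≤ (s + b) * exp ((t ^ 2 - s ^ 2) / (2 * r ^ 2)) * gaussDensity r t := by
        gcongr
        · exact gaussDensity_nonneg r t
        · nlinarith [add_one_le_exp ((t ^ 2 - s ^ 2) / (2 * r ^ 2))]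
    _ = (s + b) * gaussDensity r s := by rw [gaussDensity_eq_mul_exp r t s]; ring

lemma gaussDensity_add_le_of_le_abs (hr : 0 < r) {s u ε : ℝ} (hs : r ≤ s)
    (hv : s ≤ |u + ε|) :
    gaussDensity r (u + ε) ≤
      gaussDensity r u + |ε| / r ^ 2 * ((s + |ε| / 2) * gaussDensity r s) := by
  set v := u + ε
  have hsq : u ^ 2 - v ^ 2 ≤ 2 * |ε| * (|v| + |ε| / 2) := by
    rw [show u = v - ε by ring]
    nlinarith [neg_le_abs (v * ε), abs_mul v ε, sq_abs ε]
  have hincr : gaussDensity r v * ((u ^ 2 - v ^ 2) / (2 * r ^ 2)) ≤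
      |ε| / r ^ 2 * ((|v| + |ε| / 2) * gaussDensity r |v|) := by
    rw [gaussDensity_abs]
    calc gaussDensity r v * ((u ^ 2 - v ^ 2) / (2 * r ^ 2))
        ≤ gaussDensity r v * (2 * |ε| * (|v| + |ε| / 2) / (2 * r ^ 2)) := by
          gcongr; exact gaussDensity_nonneg r v
      _ = |ε| / r ^ 2 * ((|v| + |ε| / 2) * gaussDensity r v) := by field_simp
  have hdecay : (|v| + |ε| / 2) * gaussDensity r |v| ≤ (s + |ε| / 2) * gaussDensity r s :=
    antitoneOn_add_mul_gaussDensity hr (by positivity) (Set.mem_Ici.2 hs)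
      (Set.mem_Ici.2 (hs.trans hv)) hv
  have := mul_le_mul_of_nonneg_left hdecay (by positivity : 0 ≤ |ε| / r ^ 2)
  linarith [gaussDensity_sub_gaussDensity_le r u v]

lemma gaussDensity_add_le (hr : 0 < r) {t : ℝ} (ht : 1 ≤ t) (u ε : ℝ) :
    gaussDensity r (u + ε) ≤ exp ((t + |ε| / r) * (|ε| / r)) * gaussDensity r u
      + |ε| / r * (t + |ε| / r / 2) * gaussDensity r (r * t) := by
  have htail : 0 ≤ |ε| / r * (t + |ε| / r / 2) * gaussDensity r (r * t) :=
    mul_nonneg (mul_nonneg (by positivity) (by positivity)) (gaussDensity_nonneg r _)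
  rcases le_or_gt |u| (r * t + |ε|) with hu | hu
  · calc gaussDensity r (u + ε) ≤ exp (|u| * |ε| / r ^ 2) * gaussDensity r u :=
          gaussDensity_add_le_exp_mul r u ε
      _ ≤ exp ((t + |ε| / r) * (|ε| / r)) * gaussDensity r u := by
          rw [show (t + |ε| / r) * (|ε| / r) = (r * t + |ε|) * |ε| / r ^ 2 by field_simp]
          exact mul_le_mul_of_nonneg_right (exp_le_exp.2 (by gcongr)) (gaussDensity_nonneg r u)
      _ ≤ _ := le_add_of_nonneg_right htail
  · have hv : r * t ≤ |u + ε| := by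
      have : |u| ≤ |u + ε| + |ε| := by simpa using abs_sub (u + ε) ε
      linarith
    calc gaussDensity r (u + ε)
        ≤ gaussDensity r u + |ε| / r ^ 2 * ((r * t + |ε| / 2) * gaussDensity r (r * t)) :=
          gaussDensity_add_le_of_le_abs hr (le_mul_of_one_le_right hr.le ht) hv
      _ = gaussDensity r u + |ε| / r * (t + |ε| / r / 2) * gaussDensity r (r * t) := by
          field_simp
      _ ≤ _ := by
          gcongr
          exact le_mul_of_one_le_left (gaussDensity_nonneg r u) (one_le_exp (by positivity))

end gaussDensity

namespace IsDensity

variable {f : ℝ → ℝ}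

lemma integrable_mul_gaussDensity (hf : IsDensity f) (r x : ℝ) :
    Integrable (fun y => f y * gaussDensity r (x - y)) :=
  hf.2.1.mul_bdd
    ((continuous_gaussDensity r).comp (continuous_const.sub continuous_id)).aestronglyMeasurable
    (ae_of_all _ fun y => by
      rw [norm_of_nonneg (gaussDensity_nonneg r _)]
      exact gaussDensity_le_gaussDensity_zero r _)

lemma smoothed_le_gaussDensity_zero (hf : IsDensity f) (r x : ℝ) :
    smoothed f r x ≤ gaussDensity r 0 :=
  calc smoothed f r x ≤ ∫ y, f y * gaussDensity r 0 :=
        integral_mono (hf.integrable_mul_gaussDensity r x) (hf.2.1.mul_const _)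
          fun y => mul_le_mul_of_nonneg_left (gaussDensity_le_gaussDensity_zero r _) (hf.1 y)
    _ = gaussDensity r 0 := by rw [integral_mul_const, hf.2.2, one_mul]

lemma smoothed_add_le (hf : IsDensity f) {r ε A B : ℝ}
    (h : ∀ u, gaussDensity r (u + ε) ≤ A * gaussDensity r u + B) (x : ℝ) :
    smoothed f r (x + ε) ≤ A * smoothed f r x + B := by
  have hint := (hf.integrable_mul_gaussDensity r x).const_mul A
  calc smoothed f r (x + ε) ≤ ∫ y, (A * (f y * gaussDensity r (x - y)) + f y * B) := by
        refine integral_mono (hf.integrable_mul_gaussDensity r (x + ε))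
          (hint.add (hf.2.1.mul_const B)) fun y => ?_
        have := mul_le_mul_of_nonneg_left (h (x - y)) (hf.1 y)
        rw [show x - y + ε = x + ε - y by ring] at this
        dsimp only
        linarith
    _ = A * smoothed f r x + B := by
        rw [integral_add hint (hf.2.1.mul_const B), integral_const_mul, integral_mul_const, hf.2.2,
          one_mul]
        rfl

end IsDensity

lemma exp_add_le_one_add {a σ p : ℝ} (ha : 0 ≤ a) (hσ : 1 / 2 ≤ σ) (haσ : 8 * a * σ ≤ 1)
    (hp : p ≤ 1 / 4) :
    exp ((2 * σ + a) * a) + a * (2 * σ + a / 2) * p ≤ 1 + 10 * a * σ := by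
  have hδ0 : 0 ≤ (2 * σ + a) * a := by positivity
  have hδ : (2 * σ + a) * a ≤ 5 / 2 * (a * σ) := by nlinarith
  have hexp := abs_exp_sub_one_le (x := (2 * σ + a) * a) (by rw [abs_of_nonneg hδ0]; nlinarith)
  rw [abs_of_nonneg hδ0] at hexp
  have htail : a * (2 * σ + a / 2) * p ≤ a * σ := by
    nlinarith [mul_le_mul_of_nonneg_left hp (by positivity : 0 ≤ a * (2 * σ + a / 2))]
  linarith [le_abs_self (exp ((2 * σ + a) * a) - 1)]

/-- Close-by densities are close: if
`(8|ε|/r)·√(log(1/(r f_r(x)))) ≤ 1` then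
`f_r(x+ε)/f_r(x) ≤ 1 + (10|ε|/r)·√(log(1/(f_r(x)·r)))`. -/
theorem close_by_densities_close
    (fStar : ℝ → ℝ) (r : ℝ) (hr : 0 < r) (hf : IsDensity fStar)
    (x ε : ℝ) (hx : 0 < smoothed fStar r x)
    (hcond : (8 * |ε| / r) *
        Real.sqrt (Real.log (1 / (r * smoothed fStar r x))) ≤ 1) :
    smoothed fStar r (x + ε) / smoothed fStar r x ≤
      1 + (10 * |ε| / r) * Real.sqrt (Real.log (1 / (smoothed fStar r x * r))) := by
  set F := smoothed fStar r x
  set L := log (1 / (r * F))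
  set a := |ε| / r
  have hrF : r * F ≤ 1 / 2 :=
    (mul_le_mul_of_nonneg_left (hf.smoothed_le_gaussDensity_zero r x) hr.le).trans
      (mul_gaussDensity_zero_le_half hr)
  have hexpL : exp (-L) = r * F := by
    simp only [L, one_div, log_inv, neg_neg, exp_log (mul_pos hr hx)]
  have hL : 1 / 4 ≤ L := by
    have : log 2 ≤ L := log_le_log two_pos (by rw [le_div_iff₀ (mul_pos hr hx)]; linarith)
    linarith [log_two_gt_d9]
  have hσ : 1 / 2 ≤ √L := by rw [le_sqrt (by norm_num) (by linarith)]; linarith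
  have key := hf.smoothed_add_le
    (fun u => gaussDensity_add_le hr (t := 2 * √L) (by linarith) u ε) x
  rw [gaussDensity_self_mul hr.ne', show -(2 * √L) ^ 2 / 2 = -L + -L by
    rw [mul_pow, sq_sqrt (by linarith)]; ring, exp_add, hexpL] at key
  have haσ : 8 * a * √L ≤ 1 := by rwa [mul_div_assoc] at hcond
  have hp : r * gaussDensity r 0 * (r * F) ≤ 1 / 4 := by
    nlinarith [mul_gaussDensity_zero_le_half hr, mul_pos hr hx]
  rw [div_le_iff₀ hx, mul_comm F r]
  calc smoothed fStar r (x + ε)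
      ≤ (exp ((2 * √L + a) * a) + a * (2 * √L + a / 2) * (r * gaussDensity r 0 * (r * F))) * F :=
        key.trans_eq (by ring)
    _ ≤ (1 + 10 * a * √L) * F :=
        mul_le_mul_of_nonneg_right (exp_add_le_one_add (by positivity) hσ haσ hp) hx.le
    _ = _ := by ring
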